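/- Let X be a Hausdorff locally convex space and 𝒮 ⊆ L(X) a subsemigroup that is left amenable for the topology of pointwise convergence and has relatively compact convex orbits, i.e., {Tx : T ∈ co 𝒮} is relatively compact in X for every x ∈ X. Then for a net (T_α) in K(co 𝒮) the following are equivalent: (i) (T_α) is a left ergodic net for 𝒮; (ii) every cluster point of (T_α) in the topology of pointwise convergence belongs to ker(K(co 𝒮)). -/

import Mathlib

open Filter Topology Set

namespace Stmt17

variable {X : Type*} [AddCommGroup X] [Module ℂ X] [TopologicalSpace X]
  [IsTopologicalAddGroup X] [ContinuousSMul ℂ X] [T2Space X] [LocallyConvexSpace ℝ X]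

/-- The underlying functions of a set of continuous linear operators. -/
def carrier (S : Set (X →L[ℂ] X)) : Set (X → X) :=
  (fun T : X →L[ℂ] X => (T : X → X)) '' S

/-- The convex hull `co 𝒮` of the operator set, taken inside `X → X`. -/
noncomputable def convS (S : Set (X →L[ℂ] X)) : Set (X → X) :=
  convexHull ℝ (carrier S)

/-- The Köhler semigroup `K(co 𝒮)`: the closure of `co 𝒮` in `X → X` with the
topology of pointwise convergence. -/
noncomputable def KohlerConv (S : Set (X →L[ℂ] X)) : Set (X → X) :=
  closure (convS S)

/-- Left amenability of a set of maps `A ⊆ X → X`, viewed as a semigroup under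
composition with the topology of pointwise convergence. -/
def IsLeftAmenableSet (A : Set (X → X)) : Prop :=
  ∃ m : BoundedContinuousFunction A ℝ →ₗ[ℝ] ℝ,
    (∀ f : BoundedContinuousFunction A ℝ, (∀ t, 0 ≤ f t) → 0 ≤ m f) ∧
    m 1 = 1 ∧
    ∀ (s : A) (f g : BoundedContinuousFunction A ℝ),
      (∀ (t : A) (h : (s : X → X) ∘ (t : X → X) ∈ A),
        g t = f ⟨(s : X → X) ∘ (t : X → X), h⟩) →
      m g = m f

/-- `I` is a (two-sided) ideal of the semigroup `G ⊆ X → X` under composition. -/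
def IsIdealOf (G I : Set (X → X)) : Prop :=
  I.Nonempty ∧ I ⊆ G ∧ ∀ a ∈ G, ∀ b ∈ I, a ∘ b ∈ I ∧ b ∘ a ∈ I

/-- The kernel of a semigroup `G ⊆ X → X`: the intersection of all its ideals. -/
def semigroupKernel (G : Set (X → X)) : Set (X → X) :=
  ⋂₀ {I | IsIdealOf G I}

/-!
Cluster points `R` of an ergodic net lie in `K = K(co 𝒮)` and satisfy `A ∘ R = R` for `A ∈ 𝒮`;
by closedness and convexity then `f ∘ R = R` for all `f ∈ K`, so `R = b ∘ R` lies in every ideal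
containing some `b`. Conversely, for an invariant mean `m` on `𝒮` the functional `Λ ↦ m (Λ|𝒮)`
on the dual of `X → X` is dominated by the support function of the compact convex set `K`, hence
is evaluation at some `Q ∈ K` (Hahn–Banach in finite dimensions plus compactness). Left
invariance of `m` gives `A ∘ Q = Q` for `A ∈ 𝒮`. Then `Q ∘ K` is an ideal, every kernel element
is fixed by `𝒮` on the left, and compactness of `K` turns this statement about cluster points
into convergence of `T_α x - A (T_α x)` to `0`.
-/

open scoped BoundedContinuousFunction

section ClusterPt

variable {ι α β : Type*} [TopologicalSpace α] [TopologicalSpace β] {l : Filter ι} {T : ι → α}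
  {f : α → β} {y : β}

theorem _root_.MapClusterPt.apply_eq_of_tendsto [T2Space β] {R : α} (hR : MapClusterPt R l T)
    (hf : ContinuousAt f R) (h : Tendsto (f ∘ T) l (𝓝 y)) : f R = y :=
  have : ClusterPt (f R) (map (f ∘ T) l) := hR.continuousAt_comp hf
  eq_of_nhds_neBot (this.mono h).neBot

theorem _root_.IsCompact.tendsto_comp_of_forall_mapClusterPt {K : Set α} (hK : IsCompact K)
    (hT : ∀ᶠ i in l, T i ∈ K) (hf : Continuous f) (h : ∀ R, MapClusterPt R l T → f R = y) :
    Tendsto (f ∘ T) l (𝓝 y) := by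
  refine (tendsto_iff_ultrafilter _ _ _).2 fun U hU => ?_
  obtain ⟨R, -, hR⟩ := hK.ultrafilter_le_nhds (U.map T) (le_principal_iff.2 (hU hT))
  have hRl : MapClusterPt R l T := (ClusterPt.of_le_nhds hR).mono (map_mono hU)
  rw [← h R hRl]
  exact (hf.tendsto R).comp hR

end ClusterPt

section Barycenter

variable {V : Type*} [AddCommGroup V] [Module ℝ V] [TopologicalSpace V] {K : Set V}

theorem _root_.IsCompact.exists_mem_forall_apply_eq_of_finset (hK : IsCompact K)
    (hKc : Convex ℝ K) (M : StrongDual ℝ V →ₗ[ℝ] ℝ)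
    (hM : ∀ (Λ : StrongDual ℝ V) (r : ℝ), (∀ y ∈ K, Λ y < r) → M Λ ≤ r)
    (u : Finset (StrongDual ℝ V)) : ∃ q ∈ K, ∀ Λ ∈ u, Λ q = M Λ := by
  let L : V →L[ℝ] u → ℝ := ContinuousLinearMap.pi fun Λ => (Λ : StrongDual ℝ V)
  let v : u → ℝ := fun Λ => M Λ
  classical
  by_contra! hne
  have hv : v ∉ L '' K := by
    rintro ⟨q, hq, hLq⟩
    obtain ⟨Λ, hΛ, hne⟩ := hne q hq
    exact hne (congrFun hLq ⟨Λ, hΛ⟩)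
  obtain ⟨ψ, r, hψK, hψv⟩ :=
    geometric_hahn_banach_closed_point (hKc.linear_image L.toLinearMap)
      (hK.image L.continuous).isClosed hv
  let e (Λ : u) : u → ℝ := fun Λ' => if Λ = Λ' then 1 else 0
  have hψ (w : u → ℝ) : ψ w = ∑ Λ, w Λ * ψ (e Λ) := ψ.toLinearMap.pi_apply_eq_sum_univ w
  have hMψL : M (ψ.comp L) = ψ v := by
    have hψL : ψ.comp L = ∑ Λ : u, ψ (e Λ) • (Λ : StrongDual ℝ V) := by
      ext y
      rw [ContinuousLinearMap.comp_apply, hψ]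
      simp [L, mul_comm]
    simp [hψL, hψ v, v, mul_comm]
  have := hM (ψ.comp L) r fun y hy => hψK _ ⟨y, hy, rfl⟩
  linarith

theorem _root_.IsCompact.exists_mem_forall_apply_eq (hK : IsCompact K) (hKc : Convex ℝ K)
    (M : StrongDual ℝ V →ₗ[ℝ] ℝ)
    (hM : ∀ (Λ : StrongDual ℝ V) (r : ℝ), (∀ y ∈ K, Λ y < r) → M Λ ≤ r) :
    ∃ q ∈ K, ∀ Λ : StrongDual ℝ V, Λ q = M Λ := by
  obtain ⟨q, hqK, hq⟩ := hK.inter_iInter_nonempty (fun Λ => {q | Λ q = M Λ})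
    (fun Λ => isClosed_eq Λ.continuous continuous_const) fun u => by
      obtain ⟨q, hqK, hq⟩ := hK.exists_mem_forall_apply_eq_of_finset hKc M hM u
      exact ⟨q, hqK, mem_iInter₂.2 hq⟩
  exact ⟨q, hqK, mem_iInter.1 hq⟩

def restrictDual {A : Set V} (hK : IsCompact K) (hAK : A ⊆ K) :
    StrongDual ℝ V →ₗ[ℝ] A →ᵇ ℝ where
  toFun Λ :=
    ⟨⟨fun t => Λ t, Λ.continuous.comp continuous_subtype_val⟩,
      Metric.isBounded_range_iff.1 <| (hK.image Λ.continuous).isBounded.subset <|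
        range_subset_iff.2 fun t => mem_image_of_mem Λ (hAK t.2)⟩
  map_add' _ _ := rfl
  map_smul' _ _ := rfl

end Barycenter

theorem map_le_of_forall_le {α : Type*} [TopologicalSpace α] {m : (α →ᵇ ℝ) →ₗ[ℝ] ℝ}
    (hpos : ∀ f : α →ᵇ ℝ, (∀ t, 0 ≤ f t) → 0 ≤ m f) (hone : m 1 = 1) {f : α →ᵇ ℝ} {r : ℝ}
    (hf : ∀ t, f t ≤ r) : m f ≤ r := by
  have := hpos (r • 1 - f) fun t => by simpa using hf t
  rwa [map_sub, map_smul, hone, smul_eq_mul, mul_one, sub_nonneg] at this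

section Kohler

variable {E : Type*} [AddCommGroup E] [Module ℂ E] [TopologicalSpace E] {S : Set (E →L[ℂ] E)}

theorem carrier_subset_kohlerConv : carrier S ⊆ KohlerConv S :=
  (subset_convexHull ℝ _).trans subset_closure

theorem isClosed_kohlerConv (S : Set (E →L[ℂ] E)) : IsClosed (KohlerConv S) :=
  isClosed_closure

theorem convex_kohlerConv [IsTopologicalAddGroup E] [ContinuousSMul ℂ E] (S : Set (E →L[ℂ] E)) :
    Convex ℝ (KohlerConv S) :=
  have : ContinuousSMul ℝ E := IsScalarTower.continuousSMul ℂ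
  (convex_convexHull ℝ _).closure

theorem isCompact_kohlerConv
    (horb : ∀ x : E, IsCompact (closure ((fun R : E → E => R x) '' convS S))) :
    IsCompact (KohlerConv S) :=
  (isCompact_univ_pi horb).of_isClosed_subset (isClosed_kohlerConv S) fun _ hf x _ =>
    image_closure_subset_closure_image (continuous_apply x) ⟨_, hf, rfl⟩

theorem kohlerConv_subset {C : Set (E → E)} (hS : carrier S ⊆ C) (hconv : Convex ℝ C)
    (hclosed : IsClosed C) : KohlerConv S ⊆ C :=
  closure_minimal (convexHull_min hS hconv) hclosed

theorem comp_mem_kohlerConv_of_mem [IsTopologicalAddGroup E] [ContinuousSMul ℂ E]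
    (hsemi : ∀ a ∈ S, ∀ b ∈ S, a ∘L b ∈ S) {A : E →L[ℂ] E} (hA : A ∈ S)
    {g : E → E} (hg : g ∈ KohlerConv S) : ⇑A ∘ g ∈ KohlerConv S := by
  refine kohlerConv_subset (C := {g | ⇑A ∘ g ∈ KohlerConv S}) ?_ ?_ ?_ hg
  · rintro _ ⟨B, hB, rfl⟩
    exact carrier_subset_kohlerConv ⟨A ∘L B, hsemi A hA B hB, rfl⟩
  · exact (convex_kohlerConv S).linear_preimage ((A.restrictScalars ℝ : E →ₗ[ℝ] E).compLeft E)
  · exact (isClosed_kohlerConv S).preimage (Pi.continuous_postcomp A.continuous)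

theorem comp_mem_kohlerConv [IsTopologicalAddGroup E] [ContinuousSMul ℂ E]
    (hsemi : ∀ a ∈ S, ∀ b ∈ S, a ∘L b ∈ S) {f g : E → E} (hf : f ∈ KohlerConv S)
    (hg : g ∈ KohlerConv S) : f ∘ g ∈ KohlerConv S :=
  kohlerConv_subset (C := {f | f ∘ g ∈ KohlerConv S})
    (by rintro _ ⟨A, hA, rfl⟩; exact comp_mem_kohlerConv_of_mem hsemi hA hg)
    ((convex_kohlerConv S).linear_preimage (LinearMap.funLeft ℝ E g))
    ((isClosed_kohlerConv S).preimage (Pi.continuous_precomp g)) hf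

theorem comp_eq_of_mem_kohlerConv [T1Space E] {R : E → E} (hR : ∀ A ∈ S, ⇑A ∘ R = R)
    {f : E → E} (hf : f ∈ KohlerConv S) : f ∘ R = R :=
  kohlerConv_subset (C := {f | f ∘ R = R}) (by rintro _ ⟨A, hA, rfl⟩; exact hR A hA)
    ((convex_singleton R).linear_preimage (LinearMap.funLeft ℝ E R))
    (isClosed_singleton.preimage (Pi.continuous_precomp R)) hf

theorem exists_mem_kohlerConv_comp_eq [IsTopologicalAddGroup E] [ContinuousSMul ℂ E] [T1Space E]
    [LocallyConvexSpace ℝ E] (hamen : IsLeftAmenableSet (carrier S))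
    (horb : ∀ x : E, IsCompact (closure ((fun R : E → E => R x) '' convS S))) :
    ∃ Q ∈ KohlerConv S, ∀ A ∈ S, ⇑A ∘ Q = Q := by
  have : ContinuousSMul ℝ E := IsScalarTower.continuousSMul ℂ
  obtain ⟨m, hpos, hone, hinv⟩ := hamen
  have hK := isCompact_kohlerConv horb
  let ρ := restrictDual hK carrier_subset_kohlerConv
  obtain ⟨Q, hQK, hQ⟩ := hK.exists_mem_forall_apply_eq (convex_kohlerConv S) (m ∘ₗ ρ)
    fun Λ r hΛ => map_le_of_forall_le hpos hone fun t => (hΛ t (carrier_subset_kohlerConv t.2)).le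
  refine ⟨Q, hQK, fun A hA => funext fun x => ?_⟩
  let ev (φ : StrongDual ℝ E) : StrongDual ℝ (E → E) := φ.comp (ContinuousLinearMap.proj x)
  refine (SeparatingDual.eq_iff_forall_dual_eq (R := ℝ)).2 fun φ => ?_
  calc φ (A (Q x)) = m (ρ (ev (φ.comp (A.restrictScalars ℝ)))) :=
      hQ (ev (φ.comp (A.restrictScalars ℝ)))
    -- `ρ (ev (φ ∘ A))` is the left translate `t ↦ ρ (ev φ) (A ∘ t)`
    _ = m (ρ (ev φ)) := hinv ⟨A, A, hA, rfl⟩ _ _ fun _ _ => rfl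
    _ = φ (Q x) := (hQ (ev φ)).symm

end Kohler

theorem mem_semigroupKernel_of_comp_eq {α : Type*} {G : Set (α → α)} {R : α → α} (hR : R ∈ G)
    (h : ∀ f ∈ G, f ∘ R = R) : R ∈ semigroupKernel G := by
  rintro I ⟨⟨b, hb⟩, hIG, hI⟩
  exact h b (hIG hb) ▸ (hI R hR b hb).2

theorem isIdealOf_image_comp {α : Type*} {G : Set (α → α)} (hG : ∀ f ∈ G, ∀ g ∈ G, f ∘ g ∈ G)
    {Q : α → α} (hQ : Q ∈ G) (hfix : ∀ f ∈ G, f ∘ Q = Q) : IsIdealOf G ((Q ∘ ·) '' G) := by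
  refine ⟨⟨Q ∘ Q, Q, hQ, rfl⟩, ?_, ?_⟩
  · rintro _ ⟨R, hR, rfl⟩
    exact hG Q hQ R hR
  · rintro f hf _ ⟨R, hR, rfl⟩
    exact ⟨⟨R, hR, by rw [← Function.comp_assoc, hfix f hf]⟩, R ∘ f, hG R hR f hf, rfl⟩

theorem leftErgodicNet_iff_clusterPt_kernel_general (S : Set (X →L[ℂ] X))
    (hsemi : ∀ a ∈ S, ∀ b ∈ S, a ∘L b ∈ S)
    (hamen : IsLeftAmenableSet (carrier S))
    (horb : ∀ x : X, IsCompact (closure ((fun R : X → X => R x) '' convS S)))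
    {ι : Type*} (l : Filter ι) (T : ι → X → X)
    (hT : ∀ i, T i ∈ KohlerConv S) :
    (∀ x : X, ∀ A ∈ S, Tendsto (fun i => T i x - A (T i x)) l (𝓝 0)) ↔
      ∀ R : X → X, MapClusterPt R l T → R ∈ semigroupKernel (KohlerConv S) := by
  constructor
  · intro herg R hR
    have hRK : R ∈ KohlerConv S :=
      (isClosed_kohlerConv S).mem_of_mapClusterPt hR (.of_forall hT)
    refine mem_semigroupKernel_of_comp_eq hRK fun f hf =>
      comp_eq_of_mem_kohlerConv (fun A hA => funext fun x => ?_) hf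
    exact (sub_eq_zero.1 (hR.apply_eq_of_tendsto (f := fun F : X → X => F x - A (F x))
      (by fun_prop) (herg x A hA))).symm
  · intro hker x A hA
    obtain ⟨Q, hQK, hQ⟩ := exists_mem_kohlerConv_comp_eq hamen horb
    have hideal := isIdealOf_image_comp (fun f hf g hg => comp_mem_kohlerConv hsemi hf hg) hQK
      fun f hf => comp_eq_of_mem_kohlerConv hQ hf
    refine (isCompact_kohlerConv horb).tendsto_comp_of_forall_mapClusterPt (.of_forall hT)
      (f := fun F : X → X => F x - A (F x)) (by fun_prop) fun R hR => ?_
    obtain ⟨R', -, rfl⟩ := hker R hR _ hideal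
    exact sub_eq_zero.2 (congrFun (hQ A hA) (R' x)).symm

/-- For a left amenable operator semigroup `𝒮` on a Hausdorff
locally convex space with relatively compact convex orbits, a net `(T_α)` in
`K(co 𝒮)` is a left ergodic net for `𝒮` iff all of its cluster points (in the
topology of pointwise convergence) belong to the kernel of `K(co 𝒮)`. -/
theorem leftErgodicNet_iff_clusterPt_kernel (S : Set (X →L[ℂ] X))
    (hsemi : ∀ a ∈ S, ∀ b ∈ S, a ∘L b ∈ S)
    (hamen : IsLeftAmenableSet (carrier S))
    (horb : ∀ x : X, IsCompact (closure ((fun R : X → X => R x) '' convS S)))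
    {ι : Type*} (l : Filter ι) (hl : l.NeBot) (T : ι → X → X)
    (hT : ∀ i, T i ∈ KohlerConv S) :
    (∀ x : X, ∀ A ∈ S, Tendsto (fun i => T i x - A (T i x)) l (𝓝 0)) ↔
      ∀ R : X → X, MapClusterPt R l T → R ∈ semigroupKernel (KohlerConv S) :=
  leftErgodicNet_iff_clusterPt_kernel_general S hsemi hamen horb l T hT

end Stmt17
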